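/- arXiv:1504.04318 — 2 statements merged into one kernel-verified Lean document; each statement's English description precedes it below -/
import Mathlib

section
/- Let Y be a Banach space, r a nonpositive integer, and X the space of functions from [r,0]∩ℤ to Y with the sup norm. Consider the delayed difference equation x̄(m+1) = L̄_m x̄_m + f̄_m(x̄_m) on (Y^N)-valued sequences, where L̄_m = (L^(1)_m,…,L^(N)_m) with each L^(i)_m : X → Y bounded linear, f̄_m : X^N → Y^N Lipschitz with f̄_m(0)=0, and x̄_m ∈ X^N denotes the history segment x̄_m(j)=x̄(m+j). Let A^(i)_{m,n} : X → X be the evolution operators of the linear equations v_i(m+1)=L^(i)_m(v_{i,m}). Suppose there are double sequences a^(i)_{m,n} and a'_{m,n} defined for m ≥ n ≥ 0 with ‖A^(i)_{m,n}‖ ≤ a^(i)_{m,n} ≤ a'_{m,n}, and suppose λ := max_{i} sup_{m≥n≥0} (1/a'_{m,n}) Σ_{k=n}^{m-1} a^(i)_{m,k+1} Lip(f^(i)_k) a'_{k,n} < 1. Then for every initial segment ᾱ ∈ X^N and every m ≥ n, the solution with x̄_n = ᾱ satisfies ‖x̄_m(·,n,ᾱ)‖ ≤ (1/(1-λ)) a'_{m,n}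 ‖ᾱ‖. -/
/-- The segment at time `m` of a `Y`-valued sequence `u`, as an element of the segment
space `X = Fin (ρ+1) → Y` (index `j` corresponds to the delay offset `j - ρ ∈ [-ρ,0]`). -/
def seg {Y : Type*} (ρ : ℕ) (u : ℤ → Y) (m : ℤ) : Fin (ρ + 1) → Y :=
  fun j => u (m - ρ + j)

/-!
Variation of constants: each component of the history segment solves the linear delay equation
with the nonlinearity as forcing term, so
`x̄_m^(i) = A^(i)_{m,n} ᾱ_i + Σ_{k=n}^{m-1} A^(i)_{m,k+1} (0,…,0, f^(i)_k(x̄_k))`.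
Taking norms gives `‖x̄_m‖ ≤ a'_{m,n} ‖ᾱ‖ + Σ_k a^(i)_{m,k+1} Lip(f^(i)_k) ‖x̄_k‖`, and a strong
induction on `m` shows that `‖x̄_m‖ ≤ a'_{m,n} ‖ᾱ‖ / (1 - λ)` is preserved: inserting the bound
for `k < m` makes the sum at most `λ a'_{m,n} ‖ᾱ‖ / (1 - λ)`.
-/

open Finset

lemma seg_add_one {Y : Type*} (ρ : ℕ) (u : ℤ → Y) (m : ℤ) :
    seg ρ u (m + 1) = Fin.snoc (Fin.tail (seg ρ u m)) (u (m + 1)) := by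
  funext j
  refine Fin.lastCases ?_ (fun j => ?_) j
  · simp only [seg, Fin.snoc_last, Fin.val_last]
    congr 1; ring
  · simp only [seg, Fin.snoc_castSucc, Fin.tail, Fin.val_castSucc, Fin.val_succ]
    congr 1; push_cast; ring

theorem variation_of_constants {M : Type*} [AddCommMonoid M] (S : ℤ → M →+ M)
    (Φ : ℤ → ℤ → M → M) (hΦ_self : ∀ k x, Φ k k x = x)
    (hΦ_succ : ∀ m k x, k ≤ m → Φ (m + 1) k x = S m (Φ m k x))
    (U w : ℤ → M) {n : ℤ} (hU : ∀ m, n ≤ m → U (m + 1) = S m (U m) + w m) :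
    ∀ m, n ≤ m → U m = Φ m n (U n) + ∑ k ∈ Ico n m, Φ m (k + 1) (w k) := by
  refine Int.leInduction (by simp [hΦ_self]) fun m hnm ih => ?_
  rw [hU m hnm, ih, map_add, map_sum, ← insert_Ico_right_eq_Ico_add_one hnm,
    sum_insert right_notMem_Ico, hΦ_self, hΦ_succ m n _ hnm]
  rw [sum_congr rfl fun k hk => (hΦ_succ m (k + 1) (w k) (mem_Ico.1 hk).2).symm]
  abel

section Delay

variable {Y : Type*} [NormedAddCommGroup Y] [NormedSpace ℝ Y] {ρ : ℕ}

variable (ρ) in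
/-- One step `u_m ↦ u_{m+1}` of the linear delay equation `u(m+1) = T u_m` on segments. -/
def delayStep (T : (Fin (ρ + 1) → Y) →L[ℝ] Y) :
    (Fin (ρ + 1) → Y) →ₗ[ℝ] (Fin (ρ + 1) → Y) where
  toFun u := Fin.snoc (Fin.tail u) (T u)
  map_add' u v := by
    funext j
    refine Fin.lastCases ?_ (fun j => ?_) j <;> simp [Fin.tail]
  map_smul' c u := by
    funext j
    refine Fin.lastCases ?_ (fun j => ?_) j <;> simp [Fin.tail]

lemma snoc_tail_add_eq_delayStep_add_single (T : (Fin (ρ + 1) → Y) →L[ℝ] Y)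
    (u : Fin (ρ + 1) → Y) (y : Y) :
    (Fin.snoc (Fin.tail u) (T u + y) : Fin (ρ + 1) → Y) =
      delayStep ρ T u + Pi.single (Fin.last ρ) y := by
  funext j
  refine Fin.lastCases ?_ (fun j => ?_) j <;>
    simp [delayStep, Fin.castSucc_ne_last]

variable (ρ) in
def IsDelayEvolution (L : ℤ → (Fin (ρ + 1) → Y) →L[ℝ] Y)
    (A : ℤ → ℤ → (Fin (ρ + 1) → Y) →L[ℝ] (Fin (ρ + 1) → Y)) : Prop :=
  ∀ n : ℤ, ∀ α : Fin (ρ + 1) → Y, ∃ v : ℤ → Y,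
    (∀ j : Fin (ρ + 1), v (n - ρ + j) = α j) ∧
    (∀ m, n ≤ m → v (m + 1) = L m (seg ρ v m)) ∧
    (∀ m, n ≤ m → A m n α = seg ρ v m)

namespace IsDelayEvolution

variable {L : ℤ → (Fin (ρ + 1) → Y) →L[ℝ] Y}
  {A : ℤ → ℤ → (Fin (ρ + 1) → Y) →L[ℝ] (Fin (ρ + 1) → Y)}

lemma apply_self (hA : IsDelayEvolution ρ L A) (n : ℤ) (α : Fin (ρ + 1) → Y) :
    A n n α = α := by
  obtain ⟨v, hv_init, -, hv_A⟩ := hA n α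
  rw [hv_A n le_rfl]
  exact funext hv_init

lemma apply_add_one (hA : IsDelayEvolution ρ L A) {m n : ℤ} (hnm : n ≤ m)
    (α : Fin (ρ + 1) → Y) : A (m + 1) n α = delayStep ρ (L m) (A m n α) := by
  obtain ⟨v, -, hv_rec, hv_A⟩ := hA n α
  rw [hv_A (m + 1) (by omega), hv_A m hnm, seg_add_one, hv_rec m hnm]
  rfl

lemma seg_eq_add_sum (hA : IsDelayEvolution ρ L A) {v g : ℤ → Y} {n : ℤ}
    (hv : ∀ m, n ≤ m → v (m + 1) = L m (seg ρ v m) + g m) :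
    ∀ m, n ≤ m → seg ρ v m =
      A m n (seg ρ v n) + ∑ k ∈ Ico n m, A m (k + 1) (Pi.single (Fin.last ρ) (g k)) :=
  variation_of_constants (fun m => (delayStep ρ (L m)).toAddMonoidHom) (fun m k => A m k)
    hA.apply_self (fun _ _ x hkm => hA.apply_add_one hkm x) _ _ fun m hm => by
      rw [seg_add_one, hv m hm, snoc_tail_add_eq_delayStep_add_single]
      rfl

lemma norm_seg_le (hA : IsDelayEvolution ρ L A) {v g : ℤ → Y} {n m : ℤ}
    (hv : ∀ m, n ≤ m → v (m + 1) = L m (seg ρ v m) + g m) {b : ℤ → ℤ → ℝ}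
    (hb : ∀ m k, k ≤ m → ‖A m k‖ ≤ b m k) (hnm : n ≤ m) :
    ‖seg ρ v m‖ ≤ b m n * ‖seg ρ v n‖ + ∑ k ∈ Ico n m, b m (k + 1) * ‖g k‖ := by
  rw [hA.seg_eq_add_sum hv m hnm]
  refine (norm_add_le _ _).trans
    (add_le_add ?_ ((norm_sum_le _ _).trans (sum_le_sum fun k hk => ?_)))
  · exact (A m n).le_of_opNorm_le (hb m n hnm) _
  · have hkm : k + 1 ≤ m := (mem_Ico.1 hk).2
    have h := (A m (k + 1)).le_of_opNorm_le (hb m (k + 1) hkm) (Pi.single (Fin.last ρ) (g k))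
    rwa [Pi.norm_single] at h

end IsDelayEvolution

end Delay

lemma nonneg_of_norm_sub_le_mul {E F : Type*} [NormedAddCommGroup E] [Nontrivial E]
    [SeminormedAddCommGroup F] {g : E → F} {K : ℝ} (h : ∀ u v, ‖g u - g v‖ ≤ K * ‖u - v‖) :
    0 ≤ K := by
  obtain ⟨u, hu⟩ := exists_ne (0 : E)
  have hu' := h u 0
  rw [sub_zero] at hu'
  exact nonneg_of_mul_nonneg_left ((norm_nonneg _).trans hu') (norm_pos_iff.2 hu)

/-- The inductive step of the discrete Gronwall-type argument. -/
lemma le_of_le_add_sum_mul {ι : Type*} {s : Finset ι} {K u w : ι → ℝ} {x a c lam : ℝ}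
    (hlam : lam < 1) (hc : 0 ≤ c) (hK : ∀ k ∈ s, 0 ≤ K k)
    (hx : x ≤ a * c + ∑ k ∈ s, K k * u k) (hu : ∀ k ∈ s, u k ≤ 1 / (1 - lam) * w k * c)
    (hKw : ∑ k ∈ s, K k * w k ≤ lam * a) : x ≤ 1 / (1 - lam) * a * c := by
  have h1 : 0 < 1 - lam := by linarith
  have hsum : ∑ k ∈ s, K k * u k ≤ (∑ k ∈ s, K k * w k) * (c / (1 - lam)) := by
    rw [sum_mul]
    refine sum_le_sum fun k hk => ?_
    calc K k * u k ≤ K k * (1 / (1 - lam) * w k * c) :=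
          mul_le_mul_of_nonneg_left (hu k hk) (hK k hk)
      _ = K k * w k * (c / (1 - lam)) := by ring
  have hKw' := mul_le_mul_of_nonneg_right hKw (div_nonneg hc h1.le)
  calc x ≤ a * c + lam * a * (c / (1 - lam)) := by linarith
    _ = 1 / (1 - lam) * a * c := by field_simp; ring


theorem stmt0_general {Y : Type*} [NormedAddCommGroup Y] [NormedSpace ℝ Y]
    {N ρ : ℕ}
    (L : ℤ → Fin N → ((Fin (ρ + 1) → Y) →L[ℝ] Y))
    (f : ℤ → (Fin N → Fin (ρ + 1) → Y) → (Fin N → Y))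
    (Lf : ℤ → Fin N → ℝ)
    (hf0 : ∀ m i, f m 0 i = 0)
    (hfLip : ∀ m i u v, ‖f m u i - f m v i‖ ≤ Lf m i * ‖u - v‖)
    (A : ℤ → ℤ → Fin N → ((Fin (ρ + 1) → Y) →L[ℝ] (Fin (ρ + 1) → Y)))
    (hA : ∀ i : Fin N, ∀ n : ℤ, ∀ α : Fin (ρ + 1) → Y, ∃ v : ℤ → Y,
      (∀ j : Fin (ρ + 1), v (n - ρ + j) = α j) ∧
      (∀ m, n ≤ m → v (m + 1) = L m i (seg ρ v m)) ∧
      (∀ m, n ≤ m → A m n i α = seg ρ v m))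
    (aa : ℤ → ℤ → Fin N → ℝ) (a' : ℤ → ℤ → ℝ)
    (haA : ∀ m n : ℤ, ∀ i, n ≤ m → ‖A m n i‖ ≤ aa m n i)
    (haa' : ∀ m n : ℤ, ∀ i, n ≤ m → aa m n i ≤ a' m n)
    (ha'pos : ∀ m n : ℤ, 0 ≤ n → n ≤ m → 0 < a' m n)
    (lam : ℝ) (hlam1 : lam < 1)
    (hlam : ∀ i : Fin N, ∀ m n : ℤ, 0 ≤ n → n ≤ m →
      (1 / a' m n) * ∑ k ∈ Finset.Ico n m, aa m (k + 1) i * Lf k i * a' k n ≤ lam)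
    (n : ℤ) (hn : 0 ≤ n) (α : Fin N → Fin (ρ + 1) → Y) (x : ℤ → Fin N → Y)
    (hinit : ∀ i : Fin N, ∀ j : Fin (ρ + 1), x (n - ρ + j) i = α i j)
    (heq : ∀ m, n ≤ m → ∀ i,
      x (m + 1) i =
        L m i (seg ρ (fun k => x k i) m) + f m (fun i' => seg ρ (fun k => x k i') m) i) :
    ∀ m, n ≤ m →
      ‖(fun i => seg ρ (fun k => x k i) m : Fin N → Fin (ρ + 1) → Y)‖ ≤
        (1 / (1 - lam)) * a' m n * ‖α‖ := by
  rcases subsingleton_or_nontrivial (Fin N → Fin (ρ + 1) → Y) with hX | hX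
  · intro m _
    simp [Subsingleton.elim _ (0 : Fin N → Fin (ρ + 1) → Y)]
  have hLf : ∀ k i, 0 ≤ Lf k i := fun k i => nonneg_of_norm_sub_le_mul (hfLip k i)
  set U : ℤ → Fin N → Fin (ρ + 1) → Y := fun k i => seg ρ (fun t => x t i) k
  have haa_nonneg : ∀ m k i, k ≤ m → 0 ≤ aa m k i :=
    fun m k i hkm => (norm_nonneg _).trans (haA m k i hkm)
  have hstep : ∀ m, n ≤ m → ∀ i,
      ‖U m i‖ ≤ a' m n * ‖α‖ + ∑ k ∈ Ico n m, aa m (k + 1) i * Lf k i * ‖U k‖ := by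
    intro m hm i
    calc ‖U m i‖ ≤ aa m n i * ‖U n i‖ + ∑ k ∈ Ico n m, aa m (k + 1) i * ‖f k (U k) i‖ :=
          IsDelayEvolution.norm_seg_le (hA i) (heq · · i) (haA · · i) hm
      _ ≤ a' m n * ‖α‖ + ∑ k ∈ Ico n m, aa m (k + 1) i * (Lf k i * ‖U k‖) := by
          rw [show U n i = α i from funext (hinit i)]
          gcongr with k hk
          · exact (haa_nonneg m n i hm).trans (haa' m n i hm)
          · exact haa' m n i hm
          · exact norm_le_pi_norm α i
          · exact haa_nonneg m (k + 1) i (mem_Ico.1 hk).2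
          · simpa [hf0] using hfLip k i (U k) 0
      _ = _ := by simp only [mul_assoc]
  intro m hm
  induction m using Int.strongRec (m := n) with
  | lt m hlt => omega
  | ge m _ ih =>
    have hbound_nonneg : 0 ≤ 1 / (1 - lam) * a' m n * ‖α‖ :=
      mul_nonneg (mul_nonneg (one_div_nonneg.2 (by linarith)) (ha'pos m n hn hm).le)
        (norm_nonneg _)
    refine (pi_norm_le_iff_of_nonneg hbound_nonneg).2 fun i =>
      le_of_le_add_sum_mul hlam1 (norm_nonneg α) (fun k hk => ?_) (hstep m hm i)
        (fun k hk => ih k (mem_Ico.1 hk).2 (mem_Ico.1 hk).1) ?_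
    · exact mul_nonneg (haa_nonneg m (k + 1) i (mem_Ico.1 hk).2) (hLf k i)
    · have h := hlam i m n hn hm
      rw [one_div, inv_mul_le_iff₀ (ha'pos m n hn hm)] at h
      linarith

/-- Abstract stability theorem for the nonlinear delayed difference equation
`x̄(m+1) = L̄_m x̄_m + f̄_m(x̄_m)`: if the evolution operators `A^(i)_{m,n}` of the linear
part satisfy `‖A^(i)_{m,n}‖ ≤ a^(i)_{m,n} ≤ a'_{m,n}` and
`λ = max_i sup (1/a'_{m,n}) Σ_{k=n}^{m-1} a^(i)_{m,k+1} Lip(f^(i)_k) a'_{k,n} < 1`, then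
`‖x̄_m(·,n,ᾱ)‖ ≤ (1/(1-λ)) a'_{m,n} ‖ᾱ‖` for all `m ≥ n`. All product spaces carry the
sup norm. -/
theorem stmt0 {Y : Type*} [NormedAddCommGroup Y] [NormedSpace ℝ Y] [CompleteSpace Y]
    {N ρ : ℕ}
    (L : ℤ → Fin N → ((Fin (ρ + 1) → Y) →L[ℝ] Y))
    (f : ℤ → (Fin N → Fin (ρ + 1) → Y) → (Fin N → Y))
    (Lf : ℤ → Fin N → ℝ)
    (hf0 : ∀ m i, f m 0 i = 0)
    (hfLip : ∀ m i u v, ‖f m u i - f m v i‖ ≤ Lf m i * ‖u - v‖)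
    (A : ℤ → ℤ → Fin N → ((Fin (ρ + 1) → Y) →L[ℝ] (Fin (ρ + 1) → Y)))
    (hA : ∀ i : Fin N, ∀ n : ℤ, ∀ α : Fin (ρ + 1) → Y, ∃ v : ℤ → Y,
      (∀ j : Fin (ρ + 1), v (n - ρ + j) = α j) ∧
      (∀ m, n ≤ m → v (m + 1) = L m i (seg ρ v m)) ∧
      (∀ m, n ≤ m → A m n i α = seg ρ v m))
    (aa : ℤ → ℤ → Fin N → ℝ) (a' : ℤ → ℤ → ℝ)
    (haA : ∀ m n : ℤ, ∀ i, n ≤ m → ‖A m n i‖ ≤ aa m n i)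
    (haa' : ∀ m n : ℤ, ∀ i, n ≤ m → aa m n i ≤ a' m n)
    (ha'pos : ∀ m n : ℤ, 0 ≤ n → n ≤ m → 0 < a' m n)
    (lam : ℝ) (hlam1 : lam < 1)
    (hlam : ∀ i : Fin N, ∀ m n : ℤ, 0 ≤ n → n ≤ m →
      (1 / a' m n) * ∑ k ∈ Finset.Ico n m, aa m (k + 1) i * Lf k i * a' k n ≤ lam)
    (n : ℤ) (hn : 0 ≤ n) (α : Fin N → Fin (ρ + 1) → Y) (x : ℤ → Fin N → Y)
    (hinit : ∀ i : Fin N, ∀ j : Fin (ρ + 1), x (n - ρ + j) i = α i j)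
    (heq : ∀ m, n ≤ m → ∀ i,
      x (m + 1) i =
        L m i (seg ρ (fun k => x k i) m) + f m (fun i' => seg ρ (fun k => x k i') m) i) :
    ∀ m, n ≤ m →
      ‖(fun i => seg ρ (fun k => x k i) m : Fin N → Fin (ρ + 1) → Y)‖ ≤
        (1 / (1 - lam)) * a' m n * ‖α‖ :=
  stmt0_general L f Lf hf0 hfLip A hA aa a' haA haa' ha'pos lam hlam1 hlam n hn α x hinit heq
end

section
/- Consider the difference equation x_i(m+1) = x_i(m) e^{-a_i(m)h} + θ_i(m) [ Σ_{j=1}^N b_{ij}(m) f_j(x_j(m-τ(m))) + I_i(m) ], i=1,…,N, where h > 0, a_i, b_{ij}, I_i, τ : ℕ₀ → ℝ are bounded, a_i(m) > 0, 0 ≤ τ(m) ≤ τ, θ_i(m) = (1 − e^{-a_i(m)h})/a_i(m), and each f_j : ℝ → ℝ is Lipschitz with constant F_j > 0. If a_i^- > Σ_{j=1}^N b_{ij}^+ F_j for every i = 1,…,N, where a_i^- = inf_m a_i(m) and b_{ij}^+ = sup_m |b_{ij}(m)|, then the model is globally exponentially stable: there exist constants μ > 0 and C > 1 such that ‖x̄_m(·,n,ᾱ)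 − x̄_m(·,n,ᾱ*)‖ ≤ C e^{-μ(m-n)} ‖ᾱ − ᾱ*‖ for all initial segments ᾱ, ᾱ* : [-τ,0]∩ℤ → ℝ^N and all m ≥ n ≥ 0. -/
/-!
Write `z = x - y` and `V(m)` for the norm of the segment of `z` at time `m`. Each component of
`z(m+1)` is a convex combination, with weights `e^{-a_i(m)h}` and `1 - e^{-a_i(m)h}`, of `z_i(m)`
and of `Σ_j b_{ij}(m)(f_j(x_j) - f_j(y_j)) / a_i(m)`, and the latter is at most `q_i V(m)` with
`q_i = Σ_j b_{ij}^+ F_j / a_i^- < 1`. Hence `‖z(m+1)‖ ≤ ρ V(m)` for a uniform `ρ < 1`. This makes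
`V` nonincreasing from time `n` on, and `V(m + τ + 1) ≤ ρ V(m)` because the window at time
`m + τ + 1` consists of values produced after time `m`; so `V` decays like `ρ^{(m-n)/(τ+1)}`.
-/

open Real

/-- The norm of the segment of `u` at time `m`, with maximum delay `τ`:
`max_{i} max_{j = -τ,…,0} |u(m+j)_i|` (the norm on `Fin N → ℝ` is the sup norm). -/
noncomputable def segNorm {N : ℕ} (τ : ℕ) (u : ℤ → Fin N → ℝ) (m : ℤ) : ℝ :=
  (Finset.Icc (m - τ) m).sup' (Finset.nonempty_Icc.mpr (by omega)) fun k => ‖u k‖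

section Segment

variable {N τ : ℕ} {u : ℤ → Fin N → ℝ}

theorem segNorm_le_iff {m : ℤ} {c : ℝ} :
    segNorm τ u m ≤ c ↔ ∀ k, m - τ ≤ k → k ≤ m → ‖u k‖ ≤ c := by
  simp only [segNorm, Finset.sup'_le_iff, Finset.mem_Icc, and_imp]

theorem norm_le_segNorm {m k : ℤ} (h₁ : m - τ ≤ k) (h₂ : k ≤ m) : ‖u k‖ ≤ segNorm τ u m :=
  segNorm_le_iff.1 le_rfl k h₁ h₂

theorem abs_apply_le_segNorm {m k : ℤ} (h₁ : m - τ ≤ k) (h₂ : k ≤ m) (i : Fin N) :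
    |u k i| ≤ segNorm τ u m :=
  (norm_le_pi_norm (u k) i).trans (norm_le_segNorm h₁ h₂)

theorem segNorm_nonneg (m : ℤ) : 0 ≤ segNorm τ u m :=
  (norm_nonneg _).trans (norm_le_segNorm (u := u) (by omega) le_rfl)

variable {ρ : ℝ} {n : ℤ}

theorem segNorm_antitoneOn (hρ₁ : ρ ≤ 1)
    (hstep : ∀ m, n ≤ m → ‖u (m + 1)‖ ≤ ρ * segNorm τ u m) :
    AntitoneOn (segNorm τ u) (Set.Ici n) := by
  refine antitoneOn_of_succ_le Set.ordConnected_Ici fun m _ hm _ => ?_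
  rw [Order.succ_eq_add_one, segNorm_le_iff]
  intro k hk₁ hk₂
  rcases hk₂.eq_or_lt with rfl | hk₂
  · exact (hstep m hm).trans (mul_le_of_le_one_left (segNorm_nonneg m) hρ₁)
  · exact norm_le_segNorm (by omega) (by omega)

theorem segNorm_add_le (hρ₀ : 0 ≤ ρ) (hρ₁ : ρ ≤ 1)
    (hstep : ∀ m, n ≤ m → ‖u (m + 1)‖ ≤ ρ * segNorm τ u m) {m : ℤ} (hm : n ≤ m) :
    segNorm τ u (m + (τ + 1)) ≤ ρ * segNorm τ u m := by
  rw [segNorm_le_iff]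
  intro k hk₁ hk₂
  calc ‖u k‖ = ‖u (k - 1 + 1)‖ := by rw [sub_add_cancel]
    _ ≤ ρ * segNorm τ u (k - 1) := hstep _ (by omega)
    _ ≤ ρ * segNorm τ u m := by
      gcongr
      exact segNorm_antitoneOn hρ₁ hstep (Set.mem_Ici.2 hm) (Set.mem_Ici.2 (by omega)) (by omega)

theorem segNorm_add_mul_le (hρ₀ : 0 ≤ ρ) (hρ₁ : ρ ≤ 1)
    (hstep : ∀ m, n ≤ m → ‖u (m + 1)‖ ≤ ρ * segNorm τ u m) (s : ℕ) :
    segNorm τ u (n + (τ + 1) * s) ≤ ρ ^ s * segNorm τ u n := by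
  induction s with
  | zero => simp
  | succ s ih =>
    calc segNorm τ u (n + (τ + 1) * ↑(s + 1))
        = segNorm τ u (n + (τ + 1) * s + (τ + 1)) := by push_cast; ring_nf
      _ ≤ ρ * segNorm τ u (n + (τ + 1) * s) :=
        segNorm_add_le hρ₀ hρ₁ hstep (le_add_of_nonneg_right (by positivity))
      _ ≤ ρ * (ρ ^ s * segNorm τ u n) := by gcongr
      _ = ρ ^ (s + 1) * segNorm τ u n := by ring

theorem segNorm_add_le_pow (hρ₀ : 0 ≤ ρ) (hρ₁ : ρ ≤ 1)
    (hstep : ∀ m, n ≤ m → ‖u (m + 1)‖ ≤ ρ * segNorm τ u m) (k : ℕ) :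
    segNorm τ u (n + k) ≤ ρ ^ (k / (τ + 1)) * segNorm τ u n := by
  have hk : ((τ + 1) * (k / (τ + 1)) : ℕ) ≤ (k : ℤ) := by exact_mod_cast Nat.mul_div_le k (τ + 1)
  calc segNorm τ u (n + k) ≤ segNorm τ u (n + ((τ + 1) * (k / (τ + 1)) : ℕ)) :=
        segNorm_antitoneOn hρ₁ hstep (Set.mem_Ici.2 (by omega))
          (Set.mem_Ici.2 (by omega)) (by omega)
    _ ≤ ρ ^ (k / (τ + 1)) * segNorm τ u n := segNorm_add_mul_le hρ₀ hρ₁ hstep _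

end Segment

theorem pow_div_le_inv_mul_exp {ρ : ℝ} (hρ₀ : 0 < ρ) (hρ₁ : ρ < 1) (k p : ℕ) (hp : 0 < p) :
    ρ ^ (k / p) ≤ ρ⁻¹ * exp (-(-log ρ / p) * k) := by
  have hk : (k : ℝ) < p * (k / p + 1 : ℕ) := by exact_mod_cast Nat.lt_mul_div_succ k hp
  have hlog : log ρ < 0 := log_neg hρ₀ hρ₁
  have hp' : (0 : ℝ) < p := by exact_mod_cast hp
  have hpow : ρ ^ (k / p) = exp ((k / p : ℕ) * log ρ) := by rw [exp_nat_mul, exp_log hρ₀]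
  have hinv : ρ⁻¹ = exp (-log ρ) := by rw [exp_neg, exp_log hρ₀]
  rw [hpow, hinv, ← exp_add, exp_le_exp]
  push_cast at hk
  rw [← div_lt_iff₀' hp'] at hk
  have : ((k / p : ℕ) + 1) * log ρ ≤ (k : ℝ) / p * log ρ := by nlinarith
  have : -(-log ρ / p) * k = k / p * log ρ := by ring
  linarith

theorem exists_pos_lt_one_forall_le {ι : Type*} [Finite ι] {g : ι → ℝ} (hg : ∀ i, g i < 1) :
    ∃ ρ, 0 < ρ ∧ ρ < 1 ∧ ∀ i, g i ≤ ρ := by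
  have hle : ∀ᶠ ρ in nhdsWithin (1 : ℝ) (Set.Iio 1), ∀ i, g i ≤ ρ :=
    Filter.eventually_all.2 fun i =>
      nhdsWithin_le_nhds ((eventually_gt_nhds (hg i)).mono fun _ => le_of_lt)
  have hpos : ∀ᶠ ρ in nhdsWithin (1 : ℝ) (Set.Iio 1), 0 < ρ :=
    nhdsWithin_le_nhds (eventually_gt_nhds one_pos)
  obtain ⟨ρ, hρ₀, hρ₁, hρ⟩ := (hpos.and (eventually_mem_nhdsWithin.and hle)).exists
  exact ⟨ρ, hρ₀, hρ₁, hρ⟩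

theorem nonneg_of_abs_sub_le {f : ℝ → ℝ} {F : ℝ} (hf : ∀ u v, |f u - f v| ≤ F * |u - v|) :
    0 ≤ F := by
  simpa using (abs_nonneg _).trans (hf 1 0)

theorem abs_sum_mul_sub_le {ι : Type*} [Fintype ι] {b B F u v : ι → ℝ} {f : ι → ℝ → ℝ} {V : ℝ}
    (hb : ∀ j, |b j| ≤ B j) (hf : ∀ j u v, |f j u - f j v| ≤ F j * |u - v|)
    (huv : ∀ j, |u j - v j| ≤ V) :
    |∑ j, b j * (f j (u j) - f j (v j))| ≤ (∑ j, B j * F j) * V := by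
  rw [Finset.sum_mul]
  refine (Finset.abs_sum_le_sum_abs _ _).trans (Finset.sum_le_sum fun j _ => ?_)
  have hF := nonneg_of_abs_sub_le (hf j)
  rw [abs_mul, mul_assoc]
  exact mul_le_mul (hb j) ((hf j _ _).trans (mul_le_mul_of_nonneg_left (huv j) hF))
    (abs_nonneg _) ((abs_nonneg _).trans (hb j))

theorem abs_mul_add_div_mul_le {E a S V s w : ℝ} (hE₀ : 0 ≤ E) (hE₁ : E ≤ 1) (ha : 0 < a)
    (hs : |s| ≤ V) (hw : |w| ≤ S * V) :
    |s * E + (1 - E) / a * w| ≤ (E + (1 - E) * (S / a)) * V := by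
  have hθ : 0 ≤ (1 - E) / a := div_nonneg (sub_nonneg.2 hE₁) ha.le
  calc |s * E + (1 - E) / a * w| ≤ |s| * E + (1 - E) / a * |w| := by
        refine (abs_add_le _ _).trans_eq ?_
        rw [abs_mul, abs_mul, abs_of_nonneg hE₀, abs_of_nonneg hθ]
    _ ≤ V * E + (1 - E) / a * (S * V) := by gcongr
    _ = (E + (1 - E) * (S / a)) * V := by ring

def IsHopfieldSolution {N : ℕ} (h : ℝ) (a : ℤ → Fin N → ℝ) (b : ℤ → Fin N → Fin N → ℝ)
    (I : ℤ → Fin N → ℝ) (τd : ℤ → ℕ) (f : Fin N → ℝ → ℝ) (n : ℤ) (x : ℤ → Fin N → ℝ) : Prop :=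
  ∀ m, n ≤ m → ∀ i,
    x (m + 1) i = x m i * exp (-(a m i) * h) +
      ((1 - exp (-(a m i) * h)) / a m i) * ((∑ j, b m i j * f j (x (m - τd m) j)) + I m i)

theorem abs_sub_succ_le_of_isHopfieldSolution {N τ : ℕ} {h : ℝ} {a : ℤ → Fin N → ℝ}
    {b : ℤ → Fin N → Fin N → ℝ} {I : ℤ → Fin N → ℝ} {τd : ℤ → ℕ} {f : Fin N → ℝ → ℝ}
    {F : Fin N → ℝ} {n m : ℤ} {x y : ℤ → Fin N → ℝ} {i : Fin N} {amin : ℝ} {B : Fin N → ℝ}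
    (hh : 0 < h) (hτd : τd m ≤ τ) (hfLip : ∀ j u v, |f j u - f j v| ≤ F j * |u - v|)
    (hamin : amin ≤ a m i) (hb : ∀ j, |b m i j| ≤ B j) (hdom : ∑ j, B j * F j < amin)
    (hx : IsHopfieldSolution h a b I τd f n x) (hy : IsHopfieldSolution h a b I τd f n y)
    (hm : n ≤ m) :
    |(x - y) (m + 1) i| ≤
      ((∑ j, B j * F j) / amin + (1 - (∑ j, B j * F j) / amin) * exp (-amin * h)) *
        segNorm τ (x - y) m := by
  set S := ∑ j, B j * F j
  set E := exp (-(a m i) * h)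
  have hS : 0 ≤ S := Finset.sum_nonneg fun j _ =>
    mul_nonneg ((abs_nonneg _).trans (hb j)) (nonneg_of_abs_sub_le (hfLip j))
  have hamin₀ : 0 < amin := hS.trans_lt hdom
  have ha : 0 < a m i := hamin₀.trans_le hamin
  have hE₁ : E ≤ 1 := exp_le_one_iff.2 (by nlinarith)
  have hEE : E ≤ exp (-amin * h) := exp_le_exp.2 (by nlinarith)
  have hrec : (x - y) (m + 1) i = (x - y) m i * E + (1 - E) / a m i *
      ∑ j, b m i j * (f j (x (m - τd m) j) - f j (y (m - τd m) j)) := by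
    simp only [Pi.sub_apply, hx m hm i, hy m hm i, mul_sub, Finset.sum_sub_distrib]
    ring
  have hsum := abs_sum_mul_sub_le (u := x (m - τd m)) (v := y (m - τd m)) hb hfLip
    fun j => abs_apply_le_segNorm (τ := τ) (u := x - y) (m := m) (by omega) (by omega) j
  have hconv := abs_mul_add_div_mul_le (exp_pos _).le hE₁ ha
    (abs_apply_le_segNorm (u := x - y) (by omega) le_rfl i) hsum
  rw [hrec]
  refine hconv.trans (mul_le_mul_of_nonneg_right ?_ (segNorm_nonneg m))
  have hq₁ : S / amin ≤ 1 := (div_le_one hamin₀).2 hdom.le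
  calc E + (1 - E) * (S / a m i) ≤ E + (1 - E) * (S / amin) := by gcongr
    _ = S / amin + (1 - S / amin) * E := by ring
    _ ≤ S / amin + (1 - S / amin) * exp (-amin * h) := by gcongr

theorem stmt2_general {N τ : ℕ} (h : ℝ) (hh : 0 < h)
    (a : ℤ → Fin N → ℝ) (b : ℤ → Fin N → Fin N → ℝ) (I : ℤ → Fin N → ℝ)
    (τd : ℤ → ℕ) (hτd : ∀ m, τd m ≤ τ)
    (f : Fin N → ℝ → ℝ) (F : Fin N → ℝ)
    (hfLip : ∀ j u v, |f j u - f j v| ≤ F j * |u - v|)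
    (aminus : Fin N → ℝ) (bplus : Fin N → Fin N → ℝ)
    (ha_inf : ∀ i, IsGLB (Set.range fun m => a m i) (aminus i))
    (hb_sup : ∀ i j, IsLUB (Set.range fun m => |b m i j|) (bplus i j))
    (hyp : ∀ i, ∑ j, bplus i j * F j < aminus i) :
    ∃ μ > (0 : ℝ), ∃ C > (1 : ℝ), ∀ n : ℤ, 0 ≤ n → ∀ x y : ℤ → Fin N → ℝ,
      (∀ m, n ≤ m → ∀ i,
        x (m + 1) i = x m i * Real.exp (-(a m i) * h) +
          ((1 - Real.exp (-(a m i) * h)) / a m i) *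
            ((∑ j, b m i j * f j (x (m - τd m) j)) + I m i)) →
      (∀ m, n ≤ m → ∀ i,
        y (m + 1) i = y m i * Real.exp (-(a m i) * h) +
          ((1 - Real.exp (-(a m i) * h)) / a m i) *
            ((∑ j, b m i j * f j (y (m - τd m) j)) + I m i)) →
      ∀ m, n ≤ m →
        segNorm τ (fun k i => x k i - y k i) m ≤
          C * Real.exp (-μ * ((m : ℝ) - n)) * segNorm τ (fun k i => x k i - y k i) n := by
  set q : Fin N → ℝ := fun i => (∑ j, bplus i j * F j) / aminus i
  have hamin : ∀ i, 0 < aminus i := fun i =>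
    (Finset.sum_nonneg fun j _ => mul_nonneg ((abs_nonneg _).trans ((hb_sup i j).1 ⟨0, rfl⟩))
      (nonneg_of_abs_sub_le (hfLip j))).trans_lt (hyp i)
  have hrate : ∀ i, q i + (1 - q i) * exp (-aminus i * h) < 1 := fun i => by
    have hq : q i < 1 := (div_lt_one (hamin i)).2 (hyp i)
    have hE : exp (-aminus i * h) < 1 := exp_lt_one_iff.2 (by nlinarith [hamin i])
    nlinarith
  obtain ⟨ρ, hρ₀, hρ₁, hρ⟩ := exists_pos_lt_one_forall_le hrate
  refine ⟨-log ρ / (τ + 1), div_pos (neg_pos.2 (log_neg hρ₀ hρ₁)) (by positivity), ρ⁻¹,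
    (one_lt_inv₀ hρ₀).2 hρ₁, fun n _ x y hx hy m hm => ?_⟩
  have hstep : ∀ m, n ≤ m → ‖(x - y) (m + 1)‖ ≤ ρ * segNorm τ (x - y) m := fun m hm =>
    (pi_norm_le_iff_of_nonneg (mul_nonneg hρ₀.le (segNorm_nonneg m))).2 fun i =>
      (abs_sub_succ_le_of_isHopfieldSolution hh (hτd m) hfLip ((ha_inf i).1 ⟨m, rfl⟩)
        (fun j => (hb_sup i j).1 ⟨m, rfl⟩) (hyp i) hx hy hm).trans
        (mul_le_mul_of_nonneg_right (hρ i) (segNorm_nonneg m))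
  obtain ⟨k, rfl⟩ := Int.le.dest hm
  have hk : ((n + k : ℤ) : ℝ) - n = k := by push_cast; ring
  rw [hk]
  calc segNorm τ (x - y) (n + k) ≤ ρ ^ (k / (τ + 1)) * segNorm τ (x - y) n :=
        segNorm_add_le_pow hρ₀.le hρ₁.le hstep k
    _ ≤ ρ⁻¹ * exp (-(-log ρ / (τ + 1)) * k) * segNorm τ (x - y) n := by
        gcongr
        · exact segNorm_nonneg n
        · exact_mod_cast pow_div_le_inv_mul_exp hρ₀ hρ₁ k (τ + 1) τ.succ_pos

/-- Global exponential stability of the discretized Hopfield model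
`x_i(m+1) = x_i(m) e^{-a_i(m)h} + θ_i(m)[Σ_j b_{ij}(m) f_j(x_j(m-τ(m))) + I_i(m)]`
under the diagonal dominance condition `a_i^- > Σ_j b_{ij}^+ F_j`. -/
theorem stmt2 {N τ : ℕ} (h : ℝ) (hh : 0 < h)
    (a : ℤ → Fin N → ℝ) (b : ℤ → Fin N → Fin N → ℝ) (I : ℤ → Fin N → ℝ)
    (τd : ℤ → ℕ) (hτd : ∀ m, τd m ≤ τ)
    (f : Fin N → ℝ → ℝ) (F : Fin N → ℝ) (hF : ∀ j, 0 < F j)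
    (hfLip : ∀ j u v, |f j u - f j v| ≤ F j * |u - v|)
    (ha_pos : ∀ m i, 0 < a m i)
    (haUB : ∃ A, ∀ m i, a m i ≤ A)
    (hI : ∃ J, ∀ m i, |I m i| ≤ J)
    (aminus : Fin N → ℝ) (bplus : Fin N → Fin N → ℝ)
    (ha_inf : ∀ i, IsGLB (Set.range fun m => a m i) (aminus i))
    (hb_sup : ∀ i j, IsLUB (Set.range fun m => |b m i j|) (bplus i j))
    (hyp : ∀ i, ∑ j, bplus i j * F j < aminus i) :
    ∃ μ > (0 : ℝ), ∃ C > (1 : ℝ), ∀ n : ℤ, 0 ≤ n → ∀ x y : ℤ → Fin N → ℝ,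
      (∀ m, n ≤ m → ∀ i,
        x (m + 1) i = x m i * Real.exp (-(a m i) * h) +
          ((1 - Real.exp (-(a m i) * h)) / a m i) *
            ((∑ j, b m i j * f j (x (m - τd m) j)) + I m i)) →
      (∀ m, n ≤ m → ∀ i,
        y (m + 1) i = y m i * Real.exp (-(a m i) * h) +
          ((1 - Real.exp (-(a m i) * h)) / a m i) *
            ((∑ j, b m i j * f j (y (m - τd m) j)) + I m i)) →
      ∀ m, n ≤ m →
        segNorm τ (fun k i => x k i - y k i) m ≤
          C * Real.exp (-μ * ((m : ℝ) - n)) * segNorm τ (fun k i => x k i - y k i) n :=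
  stmt2_general h hh a b I τd hτd f F hfLip aminus bplus ha_inf hb_sup hyp
end
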